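/- arXiv:1505.03593 — 3 statements merged into one kernel-verified Lean document; each statement's English description precedes it below -/
import Mathlib

section
/- Let K be a compact Hausdorff topological group acting continuously on compact Hausdorff spaces Y₁ and Y₂, with compact cross sections C₁ ⊆ Y₁ and C₂ ⊆ Y₂ (each containing exactly one point of every orbit). If φ : C₁ → C₂ is a homeomorphism such that Stab_K(y) = Stab_K(φ(y)) for all y ∈ C₁, then φ extends to a K-equivariant homeomorphism Φ : Y₁ → Y₂. -/
/-!
Every point of `Y₁` has the form `k • c` with `c ∈ C₁`, so the only candidate is
`Φ (k • c) = k • φ c`; it is well defined because `k • c = k' • c'` forces `c = c'` and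
`k'⁻¹ * k ∈ Stab c = Stab (φ c)`. Since `K × C₁` is compact and `Y₁` is Hausdorff,
`(k, c) ↦ k • c` is a closed surjection, hence a quotient map, and `Φ` is continuous because
`(k, c) ↦ k • φ c` is. The same construction applied to `φ⁻¹` gives a continuous inverse.
-/

open MulAction Topology

def IsCrossSection (K : Type*) {Y : Type*} [Group K] [MulAction K Y] (C : Set Y) : Prop :=
  ∀ y : Y, ∃! c, c ∈ C ∧ c ∈ orbit K y

namespace IsCrossSection

variable {K Y Z : Type*} [Group K] [MulAction K Y] [MulAction K Z] {C : Set Y}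

theorem exists_smul_eq (hC : IsCrossSection K C) (y : Y) :
    ∃ (k : K) (c : C), k • (c : Y) = y := by
  obtain ⟨c, ⟨hc, k, hk⟩, -⟩ := hC y
  exact ⟨k⁻¹, ⟨c, hc⟩, inv_smul_eq_iff.mpr hk.symm⟩

theorem eq_of_smul_eq_smul (hC : IsCrossSection K C) {k k' : K} {c c' : C}
    (h : k • (c : Y) = k' • (c' : Y)) : c = c' := by
  have hc' : (c' : Y) ∈ orbit K (c : Y) := ⟨k'⁻¹ * k, by simp only [mul_smul, h, inv_smul_smul]⟩
  exact Subtype.ext ((hC c).unique ⟨c.2, mem_orbit_self _⟩ ⟨c'.2, hc'⟩)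

theorem smul_apply_eq_smul_apply (hC : IsCrossSection K C) {f : C → Z}
    (hf : ∀ c : C, stabilizer K (c : Y) ≤ stabilizer K (f c)) {k k' : K} {c c' : C}
    (h : k • (c : Y) = k' • (c' : Y)) : k • f c = k' • f c' := by
  obtain rfl := hC.eq_of_smul_eq_smul h
  have hstab : k'⁻¹ * k ∈ stabilizer K (c : Y) := by
    rw [mem_stabilizer_iff, mul_smul, h, inv_smul_smul]
  have := hf c hstab
  rwa [mem_stabilizer_iff, mul_smul, inv_smul_eq_iff] at this

theorem equivariant_ext (hC : IsCrossSection K C) {Φ Ψ : Y → Z}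
    (hΦ : ∀ (k : K) y, Φ (k • y) = k • Φ y) (hΨ : ∀ (k : K) y, Ψ (k • y) = k • Ψ y)
    (h : ∀ c : C, Φ c = Ψ c) : Φ = Ψ := by
  funext y
  obtain ⟨k, c, rfl⟩ := hC.exists_smul_eq y
  rw [hΦ, hΨ, h]

variable [TopologicalSpace K] [TopologicalSpace Y] [TopologicalSpace Z]
  [ContinuousSMul K Y] [ContinuousSMul K Z]

theorem isQuotientMap_smul [CompactSpace K] [T2Space Y] (hC : IsCrossSection K C)
    (hCc : IsCompact C) : IsQuotientMap fun x : K × C => x.1 • (x.2 : Y) := by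
  have : CompactSpace C := isCompact_iff_compactSpace.mp hCc
  have hcont : Continuous fun x : K × C => x.1 • (x.2 : Y) := by fun_prop
  refine hcont.isClosedMap.isQuotientMap hcont fun y => ?_
  obtain ⟨k, c, h⟩ := hC.exists_smul_eq y
  exact ⟨(k, c), h⟩

theorem exists_continuous_equivariant_extension [CompactSpace K] [T2Space Y]
    (hC : IsCrossSection K C) (hCc : IsCompact C) (f : C → Z) (hfc : Continuous f)
    (hf : ∀ c : C, stabilizer K (c : Y) ≤ stabilizer K (f c)) :
    ∃ Φ : Y → Z, Continuous Φ ∧ (∀ (k : K) y, Φ (k • y) = k • Φ y) ∧ ∀ c : C, Φ c = f c := by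
  let P : C(K × C, Y) := ⟨fun x => x.1 • (x.2 : Y), by fun_prop⟩
  have hq : IsQuotientMap P := hC.isQuotientMap_smul hCc
  let F : C(K × C, Z) := ⟨fun x => x.1 • f x.2, by fun_prop⟩
  have hF : Function.FactorsThrough F P := fun _ _ h => hC.smul_apply_eq_smul_apply hf h
  let Φ := hq.lift F hF
  have hΦ (k : K) (c : C) : Φ (k • (c : Y)) = k • f c :=
    DFunLike.congr_fun (hq.lift_comp F hF) (k, c)
  refine ⟨Φ, Φ.continuous, fun k y => ?_, fun c => by simpa using hΦ 1 c⟩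
  obtain ⟨k', c, rfl⟩ := hC.exists_smul_eq y
  rw [smul_smul, hΦ, hΦ, mul_smul]

end IsCrossSection

theorem stmt_1_general {K : Type*} [Group K] [TopologicalSpace K]
    [CompactSpace K]
    {Y₁ Y₂ : Type*} [TopologicalSpace Y₁] [TopologicalSpace Y₂]
    [T2Space Y₁] [T2Space Y₂]
    [MulAction K Y₁] [MulAction K Y₂] [ContinuousSMul K Y₁] [ContinuousSMul K Y₂]
    (C₁ : Set Y₁) (C₂ : Set Y₂) (hC₁c : IsCompact C₁) (hC₂c : IsCompact C₂)
    (hC₁ : ∀ y : Y₁, ∃! c, c ∈ C₁ ∧ c ∈ MulAction.orbit K y)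
    (hC₂ : ∀ y : Y₂, ∃! c, c ∈ C₂ ∧ c ∈ MulAction.orbit K y)
    (φ : C₁ ≃ₜ C₂)
    (hφ : ∀ c : C₁, MulAction.stabilizer K (c : Y₁) = MulAction.stabilizer K (φ c : Y₂)) :
    ∃ Φ : Y₁ ≃ₜ Y₂, (∀ (k : K) (y : Y₁), Φ (k • y) = k • Φ y) ∧
      ∀ c : C₁, Φ (c : Y₁) = (φ c : Y₂) := by
  have hC₁ : IsCrossSection K C₁ := hC₁
  have hC₂ : IsCrossSection K C₂ := hC₂
  obtain ⟨Φ, hΦc, hΦK, hΦC⟩ := hC₁.exists_continuous_equivariant_extension hC₁c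
    (fun c => (φ c : Y₂)) (by fun_prop) fun c => (hφ c).le
  obtain ⟨Ψ, hΨc, hΨK, hΨC⟩ := hC₂.exists_continuous_equivariant_extension hC₂c
    (fun c => (φ.symm c : Y₁)) (by fun_prop) fun c => by rw [hφ, φ.apply_symm_apply]
  have hΨΦ : Ψ ∘ Φ = id := hC₁.equivariant_ext (fun k y => by simp [hΦK, hΨK])
    (fun _ _ => rfl) fun c => by simp [hΦC, hΨC]
  have hΦΨ : Φ ∘ Ψ = id := hC₂.equivariant_ext (fun k y => by simp [hΦK, hΨK])
    (fun _ _ => rfl) fun c => by simp [hΦC, hΨC]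
  exact ⟨⟨⟨Φ, Ψ, congrFun hΨΦ, congrFun hΦΨ⟩, hΦc, hΨc⟩, hΦK, hΦC⟩

/-- Let `K` be a compact Hausdorff topological group acting continuously on compact Hausdorff
spaces `Y₁` and `Y₂`, with compact cross sections `C₁ ⊆ Y₁` and `C₂ ⊆ Y₂` (each containing exactly
one point of every orbit).  If `φ : C₁ → C₂` is a homeomorphism preserving point stabilizers,
then `φ` extends to a `K`-equivariant homeomorphism `Φ : Y₁ → Y₂`. -/
theorem stmt_1 {K : Type*} [Group K] [TopologicalSpace K] [IsTopologicalGroup K]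
    [CompactSpace K] [T2Space K]
    {Y₁ Y₂ : Type*} [TopologicalSpace Y₁] [TopologicalSpace Y₂]
    [CompactSpace Y₁] [CompactSpace Y₂] [T2Space Y₁] [T2Space Y₂]
    [MulAction K Y₁] [MulAction K Y₂] [ContinuousSMul K Y₁] [ContinuousSMul K Y₂]
    (C₁ : Set Y₁) (C₂ : Set Y₂) (hC₁c : IsCompact C₁) (hC₂c : IsCompact C₂)
    (hC₁ : ∀ y : Y₁, ∃! c, c ∈ C₁ ∧ c ∈ MulAction.orbit K y)
    (hC₂ : ∀ y : Y₂, ∃! c, c ∈ C₂ ∧ c ∈ MulAction.orbit K y)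
    (φ : C₁ ≃ₜ C₂)
    (hφ : ∀ c : C₁, MulAction.stabilizer K (c : Y₁) = MulAction.stabilizer K (φ c : Y₂)) :
    ∃ Φ : Y₁ ≃ₜ Y₂, (∀ (k : K) (y : Y₁), Φ (k • y) = k • Φ y) ∧
      ∀ c : C₁, Φ (c : Y₁) = (φ c : Y₂) :=
  stmt_1_general C₁ C₂ hC₁c hC₂c hC₁ hC₂ φ hφ
end

section
/- Let W be a finite reflection group acting on a euclidean vector space V with V^W = 0, let Δ ⊂ V be a closed Weyl chamber, and let l ∈ V* be a linear functional that is maximal on W-orbits at points of Δ (i.e., l belongs to the dual chamber Δ*). If λ ∈ Δ* satisfies λ(x) ≤ 1 for all x ∈ Δ ∩ B, where B = {x ∈ V : l(wx) ≤ 1 for all w ∈ W}, then λ(x) ≤ 1 for all x ∈ B, i.e., λ ∈ B*. -/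
theorem stmt_5_general {V : Type*} [NormedAddCommGroup V] [InnerProductSpace ℝ V]
    (W : Subgroup (V ≃ₗᵢ[ℝ] V))
    (Δ : Set V)
    (hfund : ∀ v : V, ∃ w ∈ W, w v ∈ Δ)
    (l lam : V →ₗ[ℝ] ℝ)
    (hlam : ∀ x ∈ Δ, ∀ w ∈ W, lam (w x) ≤ lam x)
    (hlam_le : ∀ x ∈ Δ, (∀ w ∈ W, l (w x) ≤ 1) → lam x ≤ 1) :
    ∀ x : V, (∀ w ∈ W, l (w x) ≤ 1) → lam x ≤ 1 := by
  intro x hx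
  obtain ⟨w, hw, hwx⟩ := hfund x
  have hx_le : lam x ≤ lam (w x) := by
    simpa using hlam (w x) hwx w⁻¹ (inv_mem hw)
  have hwx_mem_B : ∀ u ∈ W, l (u (w x)) ≤ 1 := fun u hu => by
    simpa using hx (u * w) (mul_mem hu hw)
  exact hx_le.trans (hlam_le (w x) hwx hwx_mem_B)

/-- Let `W` be a finite reflection group acting on a euclidean vector space `V` with `V^W = 0`,
let `Δ ⊂ V` be a closed Weyl chamber (a closed convex fundamental cone for the action), and let
`l ∈ V*` be maximal on `W`-orbits at points of `Δ` (i.e. `l` lies in the dual chamber `Δ*`).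
If `λ ∈ Δ*` satisfies `λ(x) ≤ 1` for all `x ∈ Δ ∩ B`, where
`B = {x ∈ V : l(wx) ≤ 1 for all w ∈ W}`, then `λ(x) ≤ 1` for all `x ∈ B`, i.e. `λ ∈ B*`. -/
theorem stmt_5 {V : Type*} [NormedAddCommGroup V] [InnerProductSpace ℝ V]
    [FiniteDimensional ℝ V]
    (W : Subgroup (V ≃ₗᵢ[ℝ] V)) [Finite W]
    (Δ : Set V) (hΔclosed : IsClosed Δ) (hΔconvex : Convex ℝ Δ)
    (hΔcone : ∀ x ∈ Δ, ∀ t : ℝ, 0 ≤ t → t • x ∈ Δ)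
    (hfund : ∀ v : V, ∃ w ∈ W, w v ∈ Δ)
    (hfix : ∀ v : V, (∀ w ∈ W, w v = v) → v = 0)
    (l lam : V →ₗ[ℝ] ℝ)
    (hl : ∀ x ∈ Δ, ∀ w ∈ W, l (w x) ≤ l x)
    (hlam : ∀ x ∈ Δ, ∀ w ∈ W, lam (w x) ≤ lam x)
    (hlam_le : ∀ x ∈ Δ, (∀ w ∈ W, l (w x) ≤ 1) → lam x ≤ 1) :
    ∀ x : V, (∀ w ∈ W, l (w x) ≤ 1) → lam x ≤ 1 :=
  stmt_5_general W Δ hfund l lam hlam hlam_le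
end

section
/- Let Z be a Hausdorff space with a closed decomposition R, let Z' ⊆ Z be the union of all non-singleton equivalence classes, and suppose Z' is closed in Z. Let R' be the restriction of R to Z'. Then R is upper semicontinuous if and only if R' is upper semicontinuous (as a decomposition of Z'). -/
/-!
Since `Z'` is closed and a union of classes, an open set `W ∩ Z'` of `Z'` extends to the open set
`W ∪ Z'ᶜ` of `Z` meeting the same classes of `Z'`; this transfers upper semicontinuity to `Z'`.
Conversely, off `Z'` every class is a point, so there a neighbourhood `U` of a class may be shrunk
to `U \ Z'`, which is open and meets only classes contained in `U`.
-/

def IsUpperSemicontinuousDecomposition {X : Type*} [TopologicalSpace X] (r : X → X → Prop) :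
    Prop :=
  ∀ (z : X) (U : Set X), IsOpen U → {y | r y z} ⊆ U →
    ∃ V : Set X, IsOpen V ∧ {y | r y z} ⊆ V ∧
      ∀ z' : X, ({y | r y z'} ∩ V).Nonempty → {y | r y z'} ⊆ U

/-- Classes are taken in `X` and open sets of the subspace `S` are compared with them through
their images; for `S` a union of classes this is upper semicontinuity of the decomposition of `S`
induced by `r`. -/
def IsUpperSemicontinuousDecompositionOn {X : Type*} [TopologicalSpace X] (r : X → X → Prop)
    (S : Set X) : Prop :=
  ∀ (z : S) (U : Set S), IsOpen U → {y | r y z} ⊆ Subtype.val '' U →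
    ∃ V : Set S, IsOpen V ∧ {y | r y z} ⊆ Subtype.val '' V ∧
      ∀ z' : S, ({y | r y z'} ∩ Subtype.val '' V).Nonempty → {y | r y z'} ⊆ Subtype.val '' U

namespace IsUpperSemicontinuousDecomposition

variable {X : Type*} [TopologicalSpace X] {r : X → X → Prop} {S : Set X}

theorem on_of_isClosed (h : IsUpperSemicontinuousDecomposition r) (hS : IsClosed S)
    (hsat : ∀ ⦃y z⦄, r y z → z ∈ S → y ∈ S) : IsUpperSemicontinuousDecompositionOn r S := by
  intro z U hU hzU
  obtain ⟨W, hW, rfl⟩ := isOpen_induced_iff.mp hU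
  rw [Subtype.image_preimage_coe] at hzU
  obtain ⟨V, hV, hzV, hVW⟩ := h z (W ∪ Sᶜ) (hW.union hS.isOpen_compl)
    fun y hy => Or.inl (hzU hy).2
  refine ⟨Subtype.val ⁻¹' V, hV.preimage continuous_subtype_val, ?_, ?_⟩ <;>
    simp only [Subtype.image_preimage_coe]
  · exact fun y hy => ⟨hsat hy z.2, hzV hy⟩
  · rintro z' ⟨w, hwz', -, hwV⟩ y hy
    have hyS : y ∈ S := hsat hy z'.2
    exact ⟨hyS, (hVW z' ⟨w, hwz', hwV⟩ hy).resolve_right (not_not_intro hyS)⟩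

theorem of_on_of_isClosed (hr : Equivalence r) (hS : IsClosed S)
    (hsat : ∀ ⦃y z⦄, r y z → z ∈ S → y ∈ S) (hsingle : ∀ ⦃y z⦄, r y z → z ∉ S → y = z)
    (h : IsUpperSemicontinuousDecompositionOn r S) : IsUpperSemicontinuousDecomposition r := by
  have class_subset_of_not_mem {U : Set X} {w z' : X} (hwz' : r w z') (hwS : w ∉ S)
      (hwU : w ∈ U) : {y | r y z'} ⊆ U := fun y hy => by
    rwa [hsingle (hr.trans hy (hr.symm hwz')) hwS]
  intro z U hU hzU
  by_cases hz : z ∈ S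
  · obtain ⟨V', hV', hzV', hV'U⟩ := h ⟨z, hz⟩ (Subtype.val ⁻¹' U)
      (hU.preimage continuous_subtype_val)
      (by rw [Subtype.image_preimage_coe]; exact fun y hy => ⟨hsat hy hz, hzU hy⟩)
    obtain ⟨W, hW, rfl⟩ := isOpen_induced_iff.mp hV'
    simp only [Subtype.image_preimage_coe] at hzV' hV'U
    refine ⟨U ∩ (W ∪ Sᶜ), hU.inter (hW.union hS.isOpen_compl),
      fun y hy => ⟨hzU hy, Or.inl (hzV' hy).2⟩, ?_⟩
    rintro z' ⟨w, hwz', hwU, hwWS⟩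
    by_cases hwS : w ∈ S
    · intro y hy
      have hyw : r y w := hr.trans hy (hr.symm hwz')
      exact (hV'U ⟨w, hwS⟩ ⟨w, hr.refl w, hwS, hwWS.resolve_right (not_not_intro hwS)⟩ hyw).2
    · exact class_subset_of_not_mem hwz' hwS hwU
  · refine ⟨U ∩ Sᶜ, hU.inter hS.isOpen_compl, fun y hy => ?_, ?_⟩
    · rw [hsingle hy hz]
      exact ⟨hzU (hr.refl z), hz⟩
    · rintro z' ⟨w, hwz', hwU, hwS⟩
      exact class_subset_of_not_mem hwz' hwS hwU

end IsUpperSemicontinuousDecomposition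

section NonsingletonPart

variable {X : Type*} {r : X → X → Prop} {y z : X}

def nonsingletonPart (r : X → X → Prop) : Set X :=
  {z | ∃ y, r y z ∧ y ≠ z}

theorem mem_nonsingletonPart_of_rel (hr : Equivalence r) (hyz : r y z)
    (hz : z ∈ nonsingletonPart r) : y ∈ nonsingletonPart r := by
  rcases eq_or_ne y z with rfl | hne
  · exact hz
  · exact ⟨z, hr.symm hyz, hne.symm⟩

theorem eq_of_rel_of_not_mem_nonsingletonPart (hyz : r y z) (hz : z ∉ nonsingletonPart r) :
    y = z :=
  by_contra fun hne => hz ⟨y, hyz, hne⟩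

end NonsingletonPart

theorem stmt_13_general {Z : Type*} [TopologicalSpace Z]
    (r : Z → Z → Prop) (hr : Equivalence r)
    (hZ' : IsClosed {z : Z | ∃ y, r y z ∧ y ≠ z}) :
    (∀ (z : Z) (U : Set Z), IsOpen U → {y | r y z} ⊆ U →
        ∃ V : Set Z, IsOpen V ∧ {y | r y z} ⊆ V ∧
          ∀ z' : Z, ({y | r y z'} ∩ V).Nonempty → {y | r y z'} ⊆ U) ↔
      (∀ (z : {z : Z | ∃ y, r y z ∧ y ≠ z}) (U : Set {z : Z | ∃ y, r y z ∧ y ≠ z}),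
        IsOpen U → {y | r (y : Z) (z : Z)} ⊆ U →
          ∃ V : Set {z : Z | ∃ y, r y z ∧ y ≠ z}, IsOpen V ∧
            {y | r (y : Z) (z : Z)} ⊆ V ∧
            ∀ z' : {z : Z | ∃ y, r y z ∧ y ≠ z},
              ({y | r (y : Z) (z' : Z)} ∩ V).Nonempty → {y | r (y : Z) (z' : Z)} ⊆ U) := by
  have hsat : ∀ ⦃y z⦄, r y z → z ∈ nonsingletonPart r → y ∈ nonsingletonPart r :=
    fun _ _ => mem_nonsingletonPart_of_rel hr
  show IsUpperSemicontinuousDecomposition r ↔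
    IsUpperSemicontinuousDecompositionOn r (nonsingletonPart r)
  exact ⟨fun h => h.on_of_isClosed hZ' hsat,
    IsUpperSemicontinuousDecomposition.of_on_of_isClosed hr hZ' hsat
      fun _ _ => eq_of_rel_of_not_mem_nonsingletonPart⟩

/-- Let `Z` be a Hausdorff space with a closed decomposition given by the equivalence relation
`r`, let `Z' ⊆ Z` be the union of all non-singleton equivalence classes, and suppose `Z'` is
closed in `Z`.  Then `r` is upper semicontinuous (as a decomposition of `Z`) iff its restriction
to `Z'` is upper semicontinuous (as a decomposition of `Z'`). -/
theorem stmt_13 {Z : Type*} [TopologicalSpace Z] [T2Space Z]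
    (r : Z → Z → Prop) (hr : Equivalence r)
    (hcl : ∀ z : Z, IsClosed {y | r y z})
    (hZ' : IsClosed {z : Z | ∃ y, r y z ∧ y ≠ z}) :
    (∀ (z : Z) (U : Set Z), IsOpen U → {y | r y z} ⊆ U →
        ∃ V : Set Z, IsOpen V ∧ {y | r y z} ⊆ V ∧
          ∀ z' : Z, ({y | r y z'} ∩ V).Nonempty → {y | r y z'} ⊆ U) ↔
      (∀ (z : {z : Z | ∃ y, r y z ∧ y ≠ z}) (U : Set {z : Z | ∃ y, r y z ∧ y ≠ z}),
        IsOpen U → {y | r (y : Z) (z : Z)} ⊆ U →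
          ∃ V : Set {z : Z | ∃ y, r y z ∧ y ≠ z}, IsOpen V ∧
            {y | r (y : Z) (z : Z)} ⊆ V ∧
            ∀ z' : {z : Z | ∃ y, r y z ∧ y ≠ z},
              ({y | r (y : Z) (z' : Z)} ∩ V).Nonempty → {y | r (y : Z) (z' : Z)} ⊆ U) :=
  stmt_13_general r hr hZ'
end
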